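/- arXiv:2410.13537 — 4 statements merged into one kernel-verified Lean document; each statement's English description precedes it below -/
import Mathlib

section
/- Let n ≥ 3 be an integer and ε > 0 a real number. Define u : ℝⁿ → ℝ by u(x) = (ε + |x|²)^{-(n-2)/2}. Then u is smooth and for every x ∈ ℝⁿ, −Δu(x) = ε·n·(n−2)·(ε + |x|²)^{-(n+2)/2}; equivalently, −Δu(x) = ε·n·(n−2)·u(x)^{(n+2)/(n−2)}. -/
open MeasureTheory Real

/-- The Euclidean Laplacian: the sum of the unmixed second partial derivatives. -/
noncomputable def euclideanLaplacian {n : ℕ} (f : EuclideanSpace ℝ (Fin n) → ℝ)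
    (x : EuclideanSpace ℝ (Fin n)) : ℝ :=
  ∑ i : Fin n,
    fderiv ℝ (fun y => fderiv ℝ f y (EuclideanSpace.single i 1)) x (EuclideanSpace.single i 1)

theorem stmt0 (n : ℕ) (hn : 3 ≤ n) (ε : ℝ) (hε : 0 < ε)
    (u : EuclideanSpace ℝ (Fin n) → ℝ)
    (hu : u = fun x => (ε + ‖x‖ ^ 2) ^ (-((n : ℝ) - 2) / 2)) :
    ContDiff ℝ (⊤ : ℕ∞) u ∧
    ∀ x : EuclideanSpace ℝ (Fin n),
      (-euclideanLaplacian u x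
          = ε * n * ((n : ℝ) - 2) * (ε + ‖x‖ ^ 2) ^ (-((n : ℝ) + 2) / 2)) ∧
      (-euclideanLaplacian u x
          = ε * n * ((n : ℝ) - 2) * u x ^ (((n : ℝ) + 2) / ((n : ℝ) - 2))) := by
  set p : ℝ := -((n : ℝ) - 2) / 2 with hp
  have hs : ∀ y : EuclideanSpace ℝ (Fin n), 0 < ε + ‖y‖ ^ 2 := fun y => by positivity
  -- derivative of the base function
  have hbase : ∀ y : EuclideanSpace ℝ (Fin n),
      HasFDerivAt (fun z : EuclideanSpace ℝ (Fin n) => ε + ‖z‖ ^ 2)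
        (2 • innerSL ℝ y) y := by
    intro y
    have h := ((hasFDerivAt_id y).norm_sq).const_add ε
    simpa using h
  -- first derivative of u
  have hu' : ∀ y : EuclideanSpace ℝ (Fin n),
      HasFDerivAt u ((2 * p * (ε + ‖y‖ ^ 2) ^ (p - 1)) • innerSL ℝ y) y := by
    intro y
    have h := (hbase y).rpow_const (p := p) (Or.inl (hs y).ne')
    rw [hu]
    refine h.congr_fderiv ?_
    ext v
    simp [smul_smul]
    ring
  have hfd : ∀ (y : EuclideanSpace ℝ (Fin n)) (i : Fin n),
      fderiv ℝ u y (EuclideanSpace.single i 1)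
        = 2 * p * (ε + ‖y‖ ^ 2) ^ (p - 1) * y i := by
    intro y i
    rw [(hu' y).fderiv]
    simp [real_inner_comm, EuclideanSpace.inner_single_left, EuclideanSpace.inner_single_right]
  -- derivative of the coefficient c y = 2p (ε+‖y‖²)^(p-1)
  have hc : ∀ y : EuclideanSpace ℝ (Fin n),
      HasFDerivAt (fun z : EuclideanSpace ℝ (Fin n) => 2 * p * (ε + ‖z‖ ^ 2) ^ (p - 1))
        ((4 * p * (p - 1) * (ε + ‖y‖ ^ 2) ^ (p - 2)) • innerSL ℝ y) y := by
    intro y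
    have h := ((hbase y).rpow_const (p := p - 1) (Or.inl (hs y).ne')).const_mul (2 * p)
    refine h.congr_fderiv ?_
    ext v
    simp [smul_smul]
    ring_nf
  -- second derivatives
  have hsecond : ∀ (x : EuclideanSpace ℝ (Fin n)) (i : Fin n),
      fderiv ℝ (fun y => fderiv ℝ u y (EuclideanSpace.single i 1)) x
          (EuclideanSpace.single i 1)
        = 4 * p * (p - 1) * (ε + ‖x‖ ^ 2) ^ (p - 2) * (x i) ^ 2
          + 2 * p * (ε + ‖x‖ ^ 2) ^ (p - 1) := by
    intro x i
    have hco : HasFDerivAt (fun z : EuclideanSpace ℝ (Fin n) => z i)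
        (innerSL ℝ (EuclideanSpace.single i (1 : ℝ))) x := by
      have h := (innerSL ℝ (EuclideanSpace.single i (1 : ℝ))).hasFDerivAt (x := x)
      convert h using 1
      ext v
      simp [EuclideanSpace.inner_single_left]
    have hprod := (hc x).mul hco
    have hfun : (fun y : EuclideanSpace ℝ (Fin n) => fderiv ℝ u y (EuclideanSpace.single i 1))
        = fun y => (2 * p * (ε + ‖y‖ ^ 2) ^ (p - 1)) * y i := funext fun y => hfd y i
    rw [hfun, (show (fun y : EuclideanSpace ℝ (Fin n) => (2 * p * (ε + ‖y‖ ^ 2) ^ (p - 1)) * y i) = ((fun z : EuclideanSpace ℝ (Fin n) => 2 * p * (ε + ‖z‖ ^ 2) ^ (p - 1)) * fun z => z i) from rfl), hprod.fderiv]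
    simp [EuclideanSpace.inner_single_left, real_inner_comm, EuclideanSpace.inner_single_right]
    ring
  -- norm squared as sum of squares
  have hnorm : ∀ x : EuclideanSpace ℝ (Fin n), ‖x‖ ^ 2 = ∑ i, (x i) ^ 2 := by
    intro x
    rw [EuclideanSpace.norm_eq, Real.sq_sqrt (by positivity)]
    simp [sq_abs]
  -- Laplacian computation
  have hlap : ∀ x : EuclideanSpace ℝ (Fin n),
      euclideanLaplacian u x
        = 4 * p * (p - 1) * (ε + ‖x‖ ^ 2) ^ (p - 2) * ‖x‖ ^ 2
          + 2 * p * n * (ε + ‖x‖ ^ 2) ^ (p - 1) := by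
    intro x
    unfold euclideanLaplacian
    rw [Finset.sum_congr rfl fun i _ => hsecond x i]
    rw [Finset.sum_add_distrib, ← Finset.mul_sum, ← hnorm]
    simp [Finset.card_univ]
    ring
  have hn2 : (0:ℝ) < (n : ℝ) - 2 := by
    have : (3:ℝ) ≤ (n:ℝ) := by exact_mod_cast hn
    linarith
  have key : ∀ x : EuclideanSpace ℝ (Fin n),
      -euclideanLaplacian u x
        = ε * n * ((n : ℝ) - 2) * (ε + ‖x‖ ^ 2) ^ (-((n : ℝ) + 2) / 2) := by
    intro x
    rw [hlap x]
    have hp2 : p - 2 = -((n : ℝ) + 2) / 2 := by rw [hp]; ring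
    have hp1 : (ε + ‖x‖ ^ 2) ^ (p - 1) = (ε + ‖x‖ ^ 2) ^ (p - 2) * (ε + ‖x‖ ^ 2) := by
      rw [← Real.rpow_add_one (hs x).ne']
      ring_nf
    rw [hp1, hp2, hp]
    ring
  constructor
  · rw [hu]
    exact (contDiff_const.add (contDiff_norm_sq ℝ)).rpow_const_of_ne fun x => (hs x).ne'
  · intro x
    refine ⟨key x, ?_⟩
    have h2 : (n:ℝ) - 2 ≠ 0 := hn2.ne'
    have he : p * (((n:ℝ) + 2) / ((n:ℝ) - 2)) = -((n:ℝ) + 2) / 2 := by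
      rw [hp]; field_simp
    rw [key x, hu]
    simp only
    rw [← Real.rpow_mul (hs x).le, he]
end

section
/- Let n ≥ 4 be an integer, r > 0, and let φ : ℝⁿ → ℝ be a smooth radial cutoff function with 0 ≤ φ ≤ 1, φ ≡ 1 on the closed ball of radius r/2 centered at 0, and support contained in the open ball B(0,r). For ε > 0 set u_ε(x) = φ(x)·(ε + |x|²)^{-(n-2)/2}. Then there exists a constant C > 0 such that for every ε ∈ (0, 1], | ∫_{ℝⁿ} |∇u_ε(x)|² dx − (n−2)² · ε^{(2−n)/2} · ∫_{ℝⁿ} |y|²·(1 + |y|²)^{−n} dy | ≤ C. -/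
open MeasureTheory Real InnerProductSpace

section aux

lemma gradient_def' {F : Type*} [NormedAddCommGroup F] [InnerProductSpace ℝ F]
    [CompleteSpace F] (f : F → ℝ) (x : F) :
    gradient f x = (toDual ℝ F).symm (fderiv ℝ f x) := rfl

lemma norm_gradient_eq {F : Type*} [NormedAddCommGroup F] [InnerProductSpace ℝ F]
    [CompleteSpace F] (f : F → ℝ) (x : F) :
    ‖gradient f x‖ = ‖fderiv ℝ f x‖ := by
  rw [gradient_def']; exact LinearIsometryEquiv.norm_map _ _

lemma hasGradientAt_aux {n : ℕ} (ε p : ℝ) (hε : 0 < ε) (x : EuclideanSpace ℝ (Fin n)) :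
    HasGradientAt (fun y : EuclideanSpace ℝ (Fin n) => (ε + ‖y‖ ^ 2) ^ p)
      ((2 * p * (ε + ‖x‖ ^ 2) ^ (p - 1)) • x) x := by
  have hpos : 0 < ε + ‖x‖ ^ 2 := by positivity
  have h1 : HasFDerivAt (fun y : EuclideanSpace ℝ (Fin n) => ‖y‖ ^ 2)
      (2 • (innerSL ℝ x)) x := (hasStrictFDerivAt_norm_sq x).hasFDerivAt
  have h2 : HasFDerivAt (fun y : EuclideanSpace ℝ (Fin n) => ε + ‖y‖ ^ 2)
      (2 • (innerSL ℝ x)) x := h1.const_add ε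
  have h3 : HasDerivAt (fun t : ℝ => t ^ p) (p * (ε + ‖x‖ ^ 2) ^ (p - 1)) (ε + ‖x‖ ^ 2) :=
    Real.hasDerivAt_rpow_const (Or.inl hpos.ne')
  have h4 := h3.comp_hasFDerivAt x h2
  rw [hasGradientAt_iff_hasFDerivAt]
  refine h4.congr_fderiv ?_
  ext y
  simp [toDual_apply_apply, inner_smul_left, real_inner_comm]
  ring

lemma gradient_v_eq {n : ℕ} (ε : ℝ) (hε : 0 < ε) (x : EuclideanSpace ℝ (Fin n)) :
    gradient (fun y : EuclideanSpace ℝ (Fin n) => (ε + ‖y‖ ^ 2) ^ (-((n : ℝ) - 2) / 2)) x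
      = (-((n : ℝ) - 2) * (ε + ‖x‖ ^ 2) ^ (-(n : ℝ) / 2)) • x := by
  have h := (hasGradientAt_aux ε (-((n : ℝ) - 2) / 2) hε x).gradient
  rw [h]
  congr 1
  rw [show -((n : ℝ) - 2) / 2 - 1 = -(n : ℝ) / 2 by ring]
  ring

lemma norm_gradient_v_sq {n : ℕ} (ε : ℝ) (hε : 0 < ε)
    (x : EuclideanSpace ℝ (Fin n)) :
    ‖gradient (fun y : EuclideanSpace ℝ (Fin n) => (ε + ‖y‖ ^ 2) ^ (-((n : ℝ) - 2) / 2)) x‖ ^ 2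
      = ((n : ℝ) - 2) ^ 2 * (‖x‖ ^ 2 * (ε + ‖x‖ ^ 2) ^ (-(n : ℝ))) := by
  have hpos : 0 < ε + ‖x‖ ^ 2 := by positivity
  rw [gradient_v_eq ε hε x, norm_smul]
  have h2 : ((ε + ‖x‖ ^ 2) ^ (-(n : ℝ) / 2)) ^ 2 = (ε + ‖x‖ ^ 2) ^ (-(n : ℝ)) := by
    rw [← Real.rpow_natCast ((ε + ‖x‖ ^ 2) ^ (-(n : ℝ) / 2)) 2, ← Real.rpow_mul hpos.le]
    norm_num
  have habs : |(-((n : ℝ) - 2) * (ε + ‖x‖ ^ 2) ^ (-(n : ℝ) / 2))| ^ 2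
      = ((n : ℝ) - 2) ^ 2 * (ε + ‖x‖ ^ 2) ^ (-(n : ℝ)) := by
    rw [sq_abs, mul_pow, h2, neg_sq]
  rw [Real.norm_eq_abs, mul_pow, habs]
  ring

lemma scaling_aux {n : ℕ} (ε : ℝ) (hε : 0 < ε) :
    ∫ x : EuclideanSpace ℝ (Fin n), ‖x‖ ^ 2 * (ε + ‖x‖ ^ 2) ^ (-(n : ℝ))
      = ε ^ ((2 - (n : ℝ)) / 2) *
        ∫ y : EuclideanSpace ℝ (Fin n), ‖y‖ ^ 2 * (1 + ‖y‖ ^ 2) ^ (-(n : ℝ)) := by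
  set f : EuclideanSpace ℝ (Fin n) → ℝ := fun x => ‖x‖ ^ 2 * (ε + ‖x‖ ^ 2) ^ (-(n : ℝ)) with hf
  have key := MeasureTheory.Measure.integral_comp_smul_of_nonneg (μ := volume) f (Real.sqrt ε)
    (hR := Real.sqrt_nonneg ε)
  have hptwise : ∀ x : EuclideanSpace ℝ (Fin n),
      f (Real.sqrt ε • x) = (ε * ε ^ (-(n : ℝ))) * (‖x‖ ^ 2 * (1 + ‖x‖ ^ 2) ^ (-(n : ℝ))) := by
    intro x
    have hns : ‖Real.sqrt ε • x‖ ^ 2 = ε * ‖x‖ ^ 2 := by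
      rw [norm_smul, Real.norm_eq_abs, abs_of_nonneg (Real.sqrt_nonneg ε), mul_pow,
        Real.sq_sqrt hε.le]
    have h1 : (0:ℝ) ≤ 1 + ‖x‖ ^ 2 := by positivity
    rw [hf]
    simp only [hns]
    rw [show ε + ε * ‖x‖ ^ 2 = ε * (1 + ‖x‖ ^ 2) by ring, Real.mul_rpow hε.le h1]
    ring
  rw [funext hptwise, integral_const_mul] at key
  have hfr : Module.finrank ℝ (EuclideanSpace ℝ (Fin n)) = n := finrank_euclideanSpace_fin
  rw [hfr] at key
  have hsq : (Real.sqrt ε) ^ n = ε ^ ((n : ℝ) / 2) := by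
    rw [← Real.rpow_natCast (Real.sqrt ε) n, Real.sqrt_eq_rpow, ← Real.rpow_mul hε.le]
    norm_num
    ring_nf
  have hsqpos : (0:ℝ) < ε ^ ((n : ℝ) / 2) := Real.rpow_pos_of_pos hε _
  rw [hsq, smul_eq_mul] at key
  have hkey2 : ∫ x, f x = ε ^ ((n:ℝ)/2) * ((ε * ε ^ (-(n : ℝ))) *
      ∫ y : EuclideanSpace ℝ (Fin n), ‖y‖ ^ 2 * (1 + ‖y‖ ^ 2) ^ (-(n : ℝ))) := by
    rw [key, ← mul_assoc, mul_inv_cancel₀ hsqpos.ne', one_mul]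
  rw [hf] at hkey2
  rw [hkey2]
  rw [show ε * ε ^ (-(n : ℝ)) = ε ^ (1 + -(n:ℝ)) by
    rw [Real.rpow_add hε, Real.rpow_one]]
  rw [← mul_assoc, ← Real.rpow_add hε]
  ring_nf

lemma integrable_one_add_sq {n : ℕ} (hn : 4 ≤ n) :
    Integrable (fun x : EuclideanSpace ℝ (Fin n) => (1 + ‖x‖ ^ 2) ^ (1 - (n : ℝ))) := by
  have h : ((Module.finrank ℝ (EuclideanSpace ℝ (Fin n))) : ℝ) < 2 * (n : ℝ) - 2 := by
    rw [finrank_euclideanSpace_fin]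
    have : (4 : ℝ) ≤ (n : ℝ) := by exact_mod_cast hn
    linarith
  have := integrable_rpow_neg_one_add_norm_sq
    (E := EuclideanSpace ℝ (Fin n)) (μ := volume) h
  convert this using 2 with x
  ring_nf

lemma integrable_w {n : ℕ} (hn : 4 ≤ n) (ε : ℝ) (hε : 0 < ε) (hε1 : ε ≤ 1) :
    Integrable (fun x : EuclideanSpace ℝ (Fin n) => ‖x‖ ^ 2 * (ε + ‖x‖ ^ 2) ^ (-(n : ℝ))) := by
  have J := (integrable_one_add_sq hn).const_mul (ε ^ (-(n : ℝ)))
  refine J.mono' ?_ (Filter.Eventually.of_forall fun x => ?_)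
  · apply Continuous.aestronglyMeasurable
    exact (continuous_norm.pow 2).mul
      ((continuous_const.add (continuous_norm.pow 2)).rpow_const
        (fun x => Or.inl (by show ε + ‖x‖ ^ 2 ≠ 0; positivity)))
  · have h1 : (0:ℝ) < 1 + ‖x‖ ^ 2 := by positivity
    have hb : ε * (1 + ‖x‖ ^ 2) ≤ ε + ‖x‖ ^ 2 := by nlinarith [sq_nonneg ‖x‖]
    have h2 : (ε + ‖x‖ ^ 2) ^ (-(n : ℝ)) ≤ (ε * (1 + ‖x‖ ^ 2)) ^ (-(n : ℝ)) :=
      Real.rpow_le_rpow_of_nonpos (by positivity) hb (neg_nonpos.mpr (Nat.cast_nonneg n))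
    have h3 : (ε * (1 + ‖x‖ ^ 2)) ^ (-(n : ℝ))
        = ε ^ (-(n : ℝ)) * (1 + ‖x‖ ^ 2) ^ (-(n : ℝ)) :=
      Real.mul_rpow hε.le h1.le
    rw [Real.norm_eq_abs, abs_of_nonneg (by positivity)]
    calc ‖x‖ ^ 2 * (ε + ‖x‖ ^ 2) ^ (-(n : ℝ))
        ≤ (1 + ‖x‖ ^ 2) * (ε ^ (-(n : ℝ)) * (1 + ‖x‖ ^ 2) ^ (-(n : ℝ))) := by
          rw [← h3]
          apply mul_le_mul (by nlinarith [sq_nonneg ‖x‖]) h2 (by positivity) h1.le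
      _ = ε ^ (-(n : ℝ)) * ((1 + ‖x‖ ^ 2) ^ (1:ℝ) * (1 + ‖x‖ ^ 2) ^ (-(n : ℝ))) := by
          rw [Real.rpow_one]; ring
      _ = ε ^ (-(n : ℝ)) * (1 + ‖x‖ ^ 2) ^ (1 - (n : ℝ)) := by
          rw [← Real.rpow_add h1]; ring_nf

lemma contDiff_v {n : ℕ} (ε p : ℝ) (hε : 0 < ε) :
    ContDiff ℝ (⊤ : ℕ∞) (fun x : EuclideanSpace ℝ (Fin n) => (ε + ‖x‖ ^ 2) ^ p) :=
  (contDiff_const.add (contDiff_norm_sq ℝ)).rpow_const_of_ne (fun x => by positivity)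

end aux

set_option maxHeartbeats 2000000 in
theorem stmt11 (n : ℕ) (hn : 4 ≤ n) (r : ℝ) (hr : 0 < r)
    (φ : EuclideanSpace ℝ (Fin n) → ℝ)
    (hφ_smooth : ContDiff ℝ (⊤ : ℕ∞) φ)
    (hφ_radial : ∀ x y : EuclideanSpace ℝ (Fin n), ‖x‖ = ‖y‖ → φ x = φ y)
    (hφ_nonneg : ∀ x, 0 ≤ φ x) (hφ_le_one : ∀ x, φ x ≤ 1)
    (hφ_one : ∀ x ∈ Metric.closedBall (0 : EuclideanSpace ℝ (Fin n)) (r / 2), φ x = 1)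
    (hφ_supp : Function.support φ ⊆ Metric.ball (0 : EuclideanSpace ℝ (Fin n)) r)
    (u : ℝ → EuclideanSpace ℝ (Fin n) → ℝ)
    (hu : u = fun ε x => φ x * (ε + ‖x‖ ^ 2) ^ (-((n : ℝ) - 2) / 2)) :
    ∃ C > (0 : ℝ), ∀ ε ∈ Set.Ioc (0 : ℝ) 1,
      |(∫ x : EuclideanSpace ℝ (Fin n), ‖gradient (u ε) x‖ ^ 2)
          - ((n : ℝ) - 2) ^ 2 * ε ^ ((2 - (n : ℝ)) / 2) *
            ∫ y : EuclideanSpace ℝ (Fin n), ‖y‖ ^ 2 * (1 + ‖y‖ ^ 2) ^ (-(n : ℝ))| ≤ C := by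
  classical
  have hn4 : (4:ℝ) ≤ (n:ℝ) := by exact_mod_cast hn
  have hn2 : (0:ℝ) ≤ (n:ℝ) - 2 := by linarith
  have h1n : (1:ℝ) - (n:ℝ) ≤ 0 := by linarith
  have hpneg : -((n:ℝ) - 2) / 2 ≤ 0 := by linarith
  have hr2 : (0:ℝ) < r / 2 := by linarith
  -- bound on the derivative of φ
  have hφcs : HasCompactSupport φ := by
    apply HasCompactSupport.intro (isCompact_closedBall (0 : EuclideanSpace ℝ (Fin n)) r)
    intro x hx
    by_contra h
    exact hx (Metric.ball_subset_closedBall (hφ_supp (Function.mem_support.2 h)))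
  obtain ⟨M, hM⟩ := (hφcs.fderiv (𝕜 := ℝ)).exists_bound_of_continuous
    (hφ_smooth.continuous_fderiv (by simp))
  set M0 : ℝ := max M 0 with hM0
  have hM0' : ∀ x, ‖fderiv ℝ φ x‖ ≤ M0 := fun x => (hM x).trans (le_max_left _ _)
  have hM0nn : 0 ≤ M0 := le_max_right _ _
  -- constants
  set a : ℝ := ((r/2)^2) ^ (-((n:ℝ)-2)/2) with ha
  set b : ℝ := ((n:ℝ)-2) * (((r/2)^2) ^ ((1-(n:ℝ))/2)) with hb
  set K : ℝ := M0 * a + b with hK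
  set C2 : ℝ := (2/r)^2 + 1 with hC2
  have hC2pos : 0 < C2 := by rw [hC2]; positivity
  set c1 : ℝ := ((n:ℝ)-2)^2 * (C2 ^ ((n:ℝ)-1)) with hc1
  have hann : 0 ≤ a := Real.rpow_nonneg (by positivity) _
  have hbnn : 0 ≤ b := mul_nonneg hn2 (Real.rpow_nonneg (by positivity) _)
  have hKnn : 0 ≤ K := by rw [hK]; positivity
  have hc1nn : 0 ≤ c1 := by rw [hc1]; positivity
  set D : EuclideanSpace ℝ (Fin n) → ℝ := fun x =>
    (Metric.closedBall (0 : EuclideanSpace ℝ (Fin n)) r).indicator (fun _ => K^2) x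
      + c1 * (1 + ‖x‖^2) ^ (1 - (n:ℝ)) with hD
  have hD0 : ∀ x, 0 ≤ D x := by
    intro x
    simp only [hD]
    have h1 : 0 ≤ (Metric.closedBall (0 : EuclideanSpace ℝ (Fin n)) r).indicator
        (fun _ => K^2) x := Set.indicator_nonneg (fun _ _ => by positivity) x
    have h2 : 0 ≤ c1 * (1 + ‖x‖^2) ^ (1 - (n:ℝ)) :=
      mul_nonneg hc1nn (Real.rpow_nonneg (by positivity) _)
    linarith
  have hDint : Integrable D := by
    rw [hD]
    apply Integrable.add
    · exact (IntegrableOn.integrable_indicator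
        (integrableOn_const measure_closedBall_lt_top.ne) measurableSet_closedBall)
    · exact (integrable_one_add_sq hn).const_mul c1
  have hDintnn : 0 ≤ ∫ x, D x := integral_nonneg hD0
  refine ⟨(∫ x, D x) + 1, by linarith, ?_⟩
  rintro ε ⟨hε0, hε1⟩
  -- the model function V
  set V : EuclideanSpace ℝ (Fin n) → ℝ :=
    fun x => (ε + ‖x‖ ^ 2) ^ (-((n:ℝ)-2)/2) with hV
  set U : EuclideanSpace ℝ (Fin n) → ℝ := fun x => φ x * V x with hU
  have hue : u ε = U := by rw [hu, hU, hV]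
  rw [hue]
  have hVsm : ContDiff ℝ (⊤ : ℕ∞) V := contDiff_v ε _ hε0
  have hUsm : ContDiff ℝ (⊤ : ℕ∞) U := hφ_smooth.mul hVsm
  -- gradient of U is continuous
  have hUgc : Continuous (gradient U) := by
    have : Continuous (fderiv ℝ U) := hUsm.continuous_fderiv (by simp)
    exact ((toDual ℝ (EuclideanSpace ℝ (Fin n))).symm.continuous).comp this
  -- gradient of U vanishes far away
  have hU0 : ∀ x : EuclideanSpace ℝ (Fin n), r < ‖x‖ → gradient U x = 0 := by
    intro x hx
    have hopen : IsOpen {y : EuclideanSpace ℝ (Fin n) | r < ‖y‖} :=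
      isOpen_lt continuous_const continuous_norm
    have hev : U =ᶠ[nhds x] (fun _ => (0:ℝ)) := by
      apply Filter.eventually_of_mem (hopen.mem_nhds hx)
      intro y hy
      have hy' : φ y = 0 := by
        by_contra h
        have := hφ_supp (Function.mem_support.2 h)
        rw [Metric.mem_ball, dist_zero_right] at this
        exact absurd hy (by simp only [Set.mem_setOf_eq]; linarith)
      simp [hU, hy']
    rw [gradient_def', hev.fderiv_eq]
    simp
  -- integrability of ‖∇U‖²
  have hUint : Integrable (fun x => ‖gradient U x‖ ^ 2) := by
    apply Continuous.integrable_of_hasCompactSupport ((hUgc.norm).pow 2)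
    apply HasCompactSupport.intro (isCompact_closedBall (0 : EuclideanSpace ℝ (Fin n)) r)
    intro x hx
    rw [Metric.mem_closedBall, dist_zero_right, not_le] at hx
    show ‖gradient U x‖ ^ 2 = 0
    rw [hU0 x hx]
    simp
  -- integrability of ‖∇V‖²
  have hVeq : (fun x => ‖gradient V x‖ ^ 2)
      = fun x : EuclideanSpace ℝ (Fin n) =>
        ((n:ℝ)-2)^2 * (‖x‖^2 * (ε + ‖x‖^2) ^ (-(n:ℝ))) := by
    funext x
    rw [hV]
    exact norm_gradient_v_sq ε hε0 x
  have hVint : Integrable (fun x => ‖gradient V x‖ ^ 2) := by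
    rw [hVeq]
    exact (integrable_w hn ε hε0 hε1).const_mul _
  -- identify the second term with ∫ ‖∇V‖²
  have hB : ((n:ℝ)-2)^2 * ε ^ ((2-(n:ℝ))/2) *
      (∫ y : EuclideanSpace ℝ (Fin n), ‖y‖^2 * (1 + ‖y‖^2) ^ (-(n:ℝ)))
      = ∫ x, ‖gradient V x‖ ^ 2 := by
    rw [hVeq, integral_const_mul, scaling_aux ε hε0]; ring
  rw [hB, ← integral_sub hUint hVint]
  -- pointwise bound
  have hpt : ∀ x, |‖gradient U x‖ ^ 2 - ‖gradient V x‖ ^ 2| ≤ D x := by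
    intro x
    by_cases hx : ‖x‖ < r / 2
    · -- inside the half ball the two gradients coincide
      have hmem : x ∈ Metric.ball (0 : EuclideanSpace ℝ (Fin n)) (r/2) := by
        rw [Metric.mem_ball, dist_zero_right]; exact hx
      have hev : U =ᶠ[nhds x] V := by
        apply Filter.eventually_of_mem (Metric.isOpen_ball.mem_nhds hmem)
        intro y hy
        have hy1 : φ y = 1 := hφ_one y (Metric.ball_subset_closedBall hy)
        simp [hU, hy1]
      have heq : gradient U x = gradient V x := by
        rw [gradient_def', gradient_def', hev.fderiv_eq]
      rw [heq, sub_self, abs_zero]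
      exact hD0 x
    · push_neg at hx
      have hx2 : (r/2)^2 ≤ ‖x‖^2 := pow_le_pow_left₀ hr2.le hx 2
      have hxpos : (0:ℝ) < ‖x‖ := lt_of_lt_of_le hr2 hx
      have htpos : (0:ℝ) < ‖x‖^2 := by positivity
      have s1 : (ε + ‖x‖^2) ^ (-(n:ℝ)) ≤ (‖x‖^2) ^ (-(n:ℝ)) :=
        Real.rpow_le_rpow_of_nonpos htpos (by linarith) (neg_nonpos.mpr (Nat.cast_nonneg n))
      have s2 : ‖x‖^2 * (‖x‖^2) ^ (-(n:ℝ)) = (‖x‖^2) ^ (1 - (n:ℝ)) := by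
        rw [show (1 - (n:ℝ)) = 1 + -(n:ℝ) by ring, Real.rpow_add htpos, Real.rpow_one]
      -- bound for the V term
      have hVb : ‖gradient V x‖^2 ≤ c1 * (1 + ‖x‖^2) ^ (1 - (n:ℝ)) := by
        rw [hV, norm_gradient_v_sq ε hε0 x]
        have s3 : (‖x‖^2) ^ (1 - (n:ℝ)) ≤ C2 ^ ((n:ℝ)-1) * (1 + ‖x‖^2) ^ (1 - (n:ℝ)) := by
          have hC2t : C2⁻¹ * (1 + ‖x‖^2) ≤ ‖x‖^2 := by
            rw [inv_mul_le_iff₀ hC2pos]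
            have h22 : (1:ℝ) ≤ (2/r)^2 * ‖x‖^2 := by
              have h23 : (1:ℝ) ≤ (2/r) * ‖x‖ := by
                rw [div_mul_eq_mul_div, le_div_iff₀ hr]
                linarith
              nlinarith
            rw [hC2]; nlinarith [sq_nonneg ‖x‖]
          have hCpos : (0:ℝ) < C2⁻¹ * (1 + ‖x‖^2) := by positivity
          have s5 := Real.rpow_le_rpow_of_nonpos hCpos hC2t h1n
          calc (‖x‖^2) ^ (1 - (n:ℝ)) ≤ (C2⁻¹ * (1 + ‖x‖^2)) ^ (1 - (n:ℝ)) := s5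
            _ = C2 ^ ((n:ℝ)-1) * (1 + ‖x‖^2) ^ (1 - (n:ℝ)) := by
                rw [Real.mul_rpow (by positivity) (by positivity),
                  Real.inv_rpow hC2pos.le, ← Real.rpow_neg hC2pos.le,
                  show -(1-(n:ℝ)) = (n:ℝ)-1 by ring]
        calc ((n:ℝ)-2)^2 * (‖x‖^2 * (ε + ‖x‖^2) ^ (-(n:ℝ)))
            ≤ ((n:ℝ)-2)^2 * (‖x‖^2 * (‖x‖^2) ^ (-(n:ℝ))) := by
              apply mul_le_mul_of_nonneg_left
                (mul_le_mul_of_nonneg_left s1 htpos.le) (by positivity)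
          _ = ((n:ℝ)-2)^2 * ((‖x‖^2) ^ (1 - (n:ℝ))) := by rw [s2]
          _ ≤ ((n:ℝ)-2)^2 * (C2 ^ ((n:ℝ)-1) * (1 + ‖x‖^2) ^ (1 - (n:ℝ))) :=
              mul_le_mul_of_nonneg_left s3 (by positivity)
          _ = c1 * (1 + ‖x‖^2) ^ (1 - (n:ℝ)) := by rw [hc1]; ring
      -- bound for the U term
      have hUb : ‖gradient U x‖^2 ≤
          (Metric.closedBall (0 : EuclideanSpace ℝ (Fin n)) r).indicator (fun _ => K^2) x := by
        by_cases hxr : ‖x‖ ≤ r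
        · rw [Set.indicator_of_mem (by rw [Metric.mem_closedBall, dist_zero_right]; exact hxr)]
          have hgn : ‖gradient U x‖ ≤ K := by
            rw [norm_gradient_eq]
            have hdφ : DifferentiableAt ℝ φ x := hφ_smooth.differentiable (by simp) x
            have hdV : DifferentiableAt ℝ V x := hVsm.differentiable (by simp) x
            have hfd : fderiv ℝ U x = φ x • fderiv ℝ V x + V x • fderiv ℝ φ x := by
              rw [hU]; exact fderiv_mul hdφ hdV
            rw [hfd]
            have hVx : |V x| ≤ a := by
              rw [hV, ha, abs_of_nonneg (Real.rpow_nonneg (by positivity) _)]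
              exact Real.rpow_le_rpow_of_nonpos (by positivity) (by linarith) hpneg
            have hfV : ‖fderiv ℝ V x‖ ≤ b := by
              rw [← norm_gradient_eq]
              have hsq2 : ‖gradient V x‖^2 ≤ b^2 := by
                rw [hV, norm_gradient_v_sq ε hε0 x, hb, mul_pow]
                have e1 : (((r/2)^2) ^ ((1-(n:ℝ))/2))^2 = ((r/2)^2) ^ (1-(n:ℝ)) := by
                  rw [← Real.rpow_natCast (((r/2)^2) ^ ((1-(n:ℝ))/2)) 2,
                    ← Real.rpow_mul (by positivity)]
                  norm_num
                rw [e1]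
                have s4 : (‖x‖^2) ^ (1 - (n:ℝ)) ≤ ((r/2)^2) ^ (1 - (n:ℝ)) :=
                  Real.rpow_le_rpow_of_nonpos (by positivity) hx2 h1n
                calc ((n:ℝ)-2)^2 * (‖x‖^2 * (ε + ‖x‖^2) ^ (-(n:ℝ)))
                    ≤ ((n:ℝ)-2)^2 * (‖x‖^2 * (‖x‖^2) ^ (-(n:ℝ))) := by
                      apply mul_le_mul_of_nonneg_left
                        (mul_le_mul_of_nonneg_left s1 htpos.le) (by positivity)
                  _ = ((n:ℝ)-2)^2 * ((‖x‖^2) ^ (1 - (n:ℝ))) := by rw [s2]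
                  _ ≤ ((n:ℝ)-2)^2 * (((r/2)^2) ^ (1 - (n:ℝ))) :=
                      mul_le_mul_of_nonneg_left s4 (by positivity)
              exact le_of_pow_le_pow_left₀ two_ne_zero hbnn hsq2
            calc ‖φ x • fderiv ℝ V x + V x • fderiv ℝ φ x‖
                ≤ ‖φ x • fderiv ℝ V x‖ + ‖V x • fderiv ℝ φ x‖ := norm_add_le _ _
              _ = |φ x| * ‖fderiv ℝ V x‖ + |V x| * ‖fderiv ℝ φ x‖ := by
                  rw [norm_smul, norm_smul, Real.norm_eq_abs, Real.norm_eq_abs]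
              _ ≤ 1 * b + a * M0 := by
                  apply add_le_add
                  · exact mul_le_mul
                      (by rw [abs_of_nonneg (hφ_nonneg x)]; exact hφ_le_one x)
                      hfV (norm_nonneg _) zero_le_one
                  · exact mul_le_mul hVx (hM0' x) (norm_nonneg _) hann
              _ = K := by rw [hK]; ring
          exact pow_le_pow_left₀ (norm_nonneg _) hgn 2
        · push_neg at hxr
          rw [hU0 x hxr]
          simp only [norm_zero, ne_eq, OfNat.ofNat_ne_zero, not_false_eq_true, zero_pow]
          exact Set.indicator_nonneg (fun _ _ => by positivity) x
      have habs : |‖gradient U x‖^2 - ‖gradient V x‖^2|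
          ≤ ‖gradient U x‖^2 + ‖gradient V x‖^2 := by
        rw [abs_sub_le_iff]
        constructor <;> nlinarith [sq_nonneg ‖gradient U x‖, sq_nonneg ‖gradient V x‖]
      calc |‖gradient U x‖^2 - ‖gradient V x‖^2|
          ≤ ‖gradient U x‖^2 + ‖gradient V x‖^2 := habs
        _ ≤ (Metric.closedBall (0 : EuclideanSpace ℝ (Fin n)) r).indicator (fun _ => K^2) x
              + c1 * (1 + ‖x‖^2) ^ (1 - (n:ℝ)) := add_le_add hUb hVb
        _ = D x := by simp only [hD]

  have h1 : |∫ x, (‖gradient U x‖ ^ 2 - ‖gradient V x‖ ^ 2)|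
      ≤ ∫ x, |‖gradient U x‖ ^ 2 - ‖gradient V x‖ ^ 2| := by
    have := norm_integral_le_integral_norm (μ := (volume : Measure (EuclideanSpace ℝ (Fin n))))
      (f := fun x => ‖gradient U x‖ ^ 2 - ‖gradient V x‖ ^ 2)
    simpa [Real.norm_eq_abs] using this
  have h2 : ∫ x, |‖gradient U x‖ ^ 2 - ‖gradient V x‖ ^ 2| ≤ ∫ x, D x :=
    integral_mono ((hUint.sub hVint).abs) hDint hpt
  linarith
end

section
/- Let n ≥ 3 be an integer, r > 0, p = 2n/(n−2), and let φ : ℝⁿ → ℝ be a smooth radial cutoff function with 0 ≤ φ ≤ 1, φ ≡ 1 on the closed ball of radius r/2 centered at 0, and support contained in the open ball B(0,r). For ε > 0 set u_ε(x) = φ(x)·(ε + |x|²)^{-(n-2)/2}. Then there exists a constant C > 0 such that for every ε ∈ (0, 1], | ∫_{ℝⁿ} u_ε(x)^p dx − ε^{−n/2} · ∫_{ℝⁿ} (1 + |y|²)^{−n} dy | ≤ C. -/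
open MeasureTheory Real

theorem stmt12 (n : ℕ) (hn : 3 ≤ n) (r : ℝ) (hr : 0 < r)
    (p : ℝ) (hp : p = 2 * n / ((n : ℝ) - 2))
    (φ : EuclideanSpace ℝ (Fin n) → ℝ)
    (hφ_smooth : ContDiff ℝ (⊤ : ℕ∞) φ)
    (hφ_radial : ∀ x y : EuclideanSpace ℝ (Fin n), ‖x‖ = ‖y‖ → φ x = φ y)
    (hφ_nonneg : ∀ x, 0 ≤ φ x) (hφ_le_one : ∀ x, φ x ≤ 1)
    (hφ_one : ∀ x ∈ Metric.closedBall (0 : EuclideanSpace ℝ (Fin n)) (r / 2), φ x = 1)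
    (hφ_supp : Function.support φ ⊆ Metric.ball (0 : EuclideanSpace ℝ (Fin n)) r)
    (u : ℝ → EuclideanSpace ℝ (Fin n) → ℝ)
    (hu : u = fun ε x => φ x * (ε + ‖x‖ ^ 2) ^ (-((n : ℝ) - 2) / 2)) :
    ∃ C > (0 : ℝ), ∀ ε ∈ Set.Ioc (0 : ℝ) 1,
      |(∫ x : EuclideanSpace ℝ (Fin n), u ε x ^ p)
          - ε ^ (-(n : ℝ) / 2) *
            ∫ y : EuclideanSpace ℝ (Fin n), (1 + ‖y‖ ^ 2) ^ (-(n : ℝ))| ≤ C := by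
  subst hu hp
  have hn2 : (2 : ℝ) < (n : ℝ) := by
    have : (3 : ℝ) ≤ (n : ℝ) := by exact_mod_cast hn
    linarith
  have hn2' : (n : ℝ) - 2 ≠ 0 := by linarith
  have hp_pos : (0 : ℝ) < 2 * (n : ℝ) / ((n : ℝ) - 2) := div_pos (by linarith) (by linarith)
  -- the reference integrand
  set g : EuclideanSpace ℝ (Fin n) → ℝ := fun y => (1 + ‖y‖ ^ 2) ^ (-(n : ℝ)) with hg_def
  have hg_pos : ∀ y : EuclideanSpace ℝ (Fin n), 0 < g y := fun y => by
    simp only [hg_def]; positivity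
  have hg_int : Integrable g := by
    have h := integrable_rpow_neg_one_add_norm_sq
      (μ := (volume : Measure (EuclideanSpace ℝ (Fin n)))) (r := 2 * (n : ℝ)) (by
        rw [finrank_euclideanSpace_fin]
        linarith)
    have heq : (fun x : EuclideanSpace ℝ (Fin n) => ((1 : ℝ) + ‖x‖ ^ 2) ^ (-(2 * (n : ℝ)) / 2))
        = g := by
      funext x
      simp only [hg_def]
      congr 1
      ring
    rwa [heq] at h
  set J : ℝ := ∫ y : EuclideanSpace ℝ (Fin n), (1 + ‖y‖ ^ 2) ^ (-(n : ℝ)) with hJ_def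
  have hJ_nonneg : 0 ≤ J := integral_nonneg fun y => (hg_pos y).le
  set m : ℝ := (r ^ 2 / 4) / (1 + r ^ 2 / 4) with hm_def
  have hm_pos : 0 < m := by positivity
  set K : ℝ := m ^ (-(n : ℝ)) with hK_def
  have hK_pos : 0 < K := Real.rpow_pos_of_pos hm_pos _
  refine ⟨K * J + 1, by positivity, ?_⟩
  rintro ε ⟨hε0, hε1⟩
  -- the scaled integrand
  set f : EuclideanSpace ℝ (Fin n) → ℝ := fun x => (ε + ‖x‖ ^ 2) ^ (-(n : ℝ)) with hf_def
  have hf_pos : ∀ x, 0 < f x := fun x => by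
    have : 0 < ε + ‖x‖ ^ 2 := by positivity
    exact Real.rpow_pos_of_pos this _
  set c : ℝ := ε ^ ((1 : ℝ) / 2) with hc_def
  have hc : 0 < c := Real.rpow_pos_of_pos hε0 _
  have hcsq : c ^ 2 = ε := by
    rw [hc_def, ← Real.rpow_natCast (ε ^ ((1 : ℝ) / 2)) 2, ← Real.rpow_mul hε0.le]
    norm_num
  have hkey : ∀ x : EuclideanSpace ℝ (Fin n),
      g (c⁻¹ • x) = ε ^ (n : ℝ) * f x := by
    intro x
    have hnx : ‖c⁻¹ • x‖ = c⁻¹ * ‖x‖ := by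
      rw [norm_smul, Real.norm_eq_abs, abs_of_pos (inv_pos.2 hc)]
    simp only [hg_def, hf_def, hnx]
    rw [mul_pow, inv_pow, hcsq]
    have h1 : (1 : ℝ) + ε⁻¹ * ‖x‖ ^ 2 = ε⁻¹ * (ε + ‖x‖ ^ 2) := by
      field_simp
    rw [h1, Real.mul_rpow (by positivity) (by positivity), Real.inv_rpow hε0.le,
      Real.rpow_neg hε0.le, inv_inv]
  -- integrability of f
  have hf_int : Integrable f := by
    have h1 : Integrable (fun x : EuclideanSpace ℝ (Fin n) => g (c⁻¹ • x)) :=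
      (integrable_comp_smul_iff volume g (inv_ne_zero hc.ne')).2 hg_int
    simp only [hkey] at h1
    have h2 := h1.const_mul (ε ^ (-(n : ℝ)))
    have h3 : (fun x : EuclideanSpace ℝ (Fin n) =>
        ε ^ (-(n : ℝ)) * (ε ^ (n : ℝ) * f x)) = f := by
      funext x
      rw [← mul_assoc, ← Real.rpow_add hε0]
      simp
    rwa [h3] at h2
  -- the scaling identity
  have hI : (∫ x : EuclideanSpace ℝ (Fin n), f x) = ε ^ (-(n : ℝ) / 2) * J := by
    have hcomp := MeasureTheory.Measure.integral_comp_inv_smul_of_nonneg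
      (volume : Measure (EuclideanSpace ℝ (Fin n))) g hc.le
    simp only [hkey, smul_eq_mul, finrank_euclideanSpace_fin] at hcomp
    rw [MeasureTheory.integral_const_mul] at hcomp
    have hcn : c ^ n = ε ^ ((n : ℝ) / 2) := by
      rw [hc_def, ← Real.rpow_natCast (ε ^ ((1 : ℝ) / 2)) n, ← Real.rpow_mul hε0.le]
      congr 1
      ring
    rw [hcn] at hcomp
    have h0 : ε ^ (-(n : ℝ)) * (ε ^ (n : ℝ) * ∫ x, f x) = ∫ x, f x := by
      rw [← mul_assoc, ← Real.rpow_add hε0]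
      simp
    rw [← h0, hcomp, ← mul_assoc, ← Real.rpow_add hε0]
    congr 2
    ring
  -- rewrite u^p pointwise
  have hup : ∀ x : EuclideanSpace ℝ (Fin n),
      (φ x * (ε + ‖x‖ ^ 2) ^ (-((n : ℝ) - 2) / 2)) ^ (2 * (n : ℝ) / ((n : ℝ) - 2))
        = φ x ^ (2 * (n : ℝ) / ((n : ℝ) - 2)) * f x := by
    intro x
    have hb : (0 : ℝ) < ε + ‖x‖ ^ 2 := by positivity
    rw [Real.mul_rpow (hφ_nonneg x) (Real.rpow_nonneg hb.le _), ← Real.rpow_mul hb.le]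
    congr 2
    field_simp
  -- integrability of u^p
  have hφp_le_one : ∀ x, φ x ^ (2 * (n : ℝ) / ((n : ℝ) - 2)) ≤ 1 := fun x =>
    Real.rpow_le_one (hφ_nonneg x) (hφ_le_one x) hp_pos.le
  have hφp_nonneg : ∀ x, 0 ≤ φ x ^ (2 * (n : ℝ) / ((n : ℝ) - 2)) := fun x =>
    Real.rpow_nonneg (hφ_nonneg x) _
  have hcont : Continuous (fun x : EuclideanSpace ℝ (Fin n) =>
      φ x ^ (2 * (n : ℝ) / ((n : ℝ) - 2)) * f x) := by
    apply Continuous.mul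
    · exact hφ_smooth.continuous.rpow_const (fun x => Or.inr hp_pos.le)
    · apply Continuous.rpow_const
      · exact continuous_const.add (continuous_norm.pow 2)
      · intro x
        left
        positivity
  have hu_int : Integrable (fun x : EuclideanSpace ℝ (Fin n) =>
      φ x ^ (2 * (n : ℝ) / ((n : ℝ) - 2)) * f x) := by
    apply hf_int.mono' hcont.aestronglyMeasurable
    filter_upwards with x
    rw [Real.norm_eq_abs, abs_of_nonneg (mul_nonneg (hφp_nonneg x) (hf_pos x).le)]
    calc φ x ^ (2 * (n : ℝ) / ((n : ℝ) - 2)) * f x ≤ 1 * f x := by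
          exact mul_le_mul_of_nonneg_right (hφp_le_one x) (hf_pos x).le
      _ = f x := one_mul _
  -- the pointwise bound on the difference
  have hbound : ∀ x : EuclideanSpace ℝ (Fin n),
      |φ x ^ (2 * (n : ℝ) / ((n : ℝ) - 2)) * f x - f x| ≤ K * g x := by
    intro x
    by_cases hx : ‖x‖ ≤ r / 2
    · have hφ1 : φ x = 1 := by
        apply hφ_one
        simpa [Metric.mem_closedBall, dist_zero_right] using hx
      rw [hφ1, Real.one_rpow, one_mul, sub_self, abs_zero]
      positivity
    · push_neg at hx
      have hx2 : r ^ 2 / 4 ≤ ‖x‖ ^ 2 := by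
        have h1 : 0 ≤ r / 2 := by linarith
        nlinarith [norm_nonneg x]
      have habs : |φ x ^ (2 * (n : ℝ) / ((n : ℝ) - 2)) * f x - f x| ≤ f x := by
        rw [abs_le]
        constructor
        · nlinarith [hφp_nonneg x, (hf_pos x).le]
        · nlinarith [hφp_le_one x, (hf_pos x).le]
      refine habs.trans ?_
      have hm1 : m * (1 + ‖x‖ ^ 2) ≤ ε + ‖x‖ ^ 2 := by
        rw [hm_def, div_mul_eq_mul_div, div_le_iff₀ (by positivity)]
        nlinarith [norm_nonneg x]
      have h2 : f x ≤ (m * (1 + ‖x‖ ^ 2)) ^ (-(n : ℝ)) :=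
        Real.rpow_le_rpow_of_nonpos (by positivity) hm1 (neg_nonpos.2 (Nat.cast_nonneg n))
      refine h2.trans_eq ?_
      rw [Real.mul_rpow hm_pos.le (by positivity)]
  -- put everything together
  simp only [← hJ_def, ← hI]
  have hdiff : (∫ x : EuclideanSpace ℝ (Fin n),
      (φ x * (ε + ‖x‖ ^ 2) ^ (-((n : ℝ) - 2) / 2)) ^ (2 * (n : ℝ) / ((n : ℝ) - 2)))
      - (∫ x : EuclideanSpace ℝ (Fin n), f x)
      = ∫ x : EuclideanSpace ℝ (Fin n),
          (φ x ^ (2 * (n : ℝ) / ((n : ℝ) - 2)) * f x - f x) := by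
    rw [integral_sub hu_int hf_int]
    congr 1
    exact integral_congr_ae (Filter.Eventually.of_forall hup)
  rw [hdiff]
  calc |∫ x : EuclideanSpace ℝ (Fin n),
        (φ x ^ (2 * (n : ℝ) / ((n : ℝ) - 2)) * f x - f x)|
      ≤ ∫ x : EuclideanSpace ℝ (Fin n),
          |φ x ^ (2 * (n : ℝ) / ((n : ℝ) - 2)) * f x - f x| := by
        simpa using norm_integral_le_integral_norm
          (fun x : EuclideanSpace ℝ (Fin n) =>
            φ x ^ (2 * (n : ℝ) / ((n : ℝ) - 2)) * f x - f x)
    _ ≤ ∫ x : EuclideanSpace ℝ (Fin n), K * g x := by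
        apply integral_mono ((hu_int.sub hf_int).abs) (hg_int.const_mul K)
        exact fun x => hbound x
    _ = K * J := by rw [MeasureTheory.integral_const_mul]
    _ ≤ K * J + 1 := by linarith
end

section
/- Let n ≥ 5 be an integer, r > 0, and let φ : ℝⁿ → ℝ be a smooth radial cutoff function with 0 ≤ φ ≤ 1, φ ≡ 1 on the closed ball of radius r/2 centered at 0, and support contained in the open ball B(0,r). For ε > 0 set u_ε(x) = φ(x)·(ε + |x|²)^{-(n-2)/2}. Then there exists a constant C > 0 such that for every ε ∈ (0, 1], | ∫_{ℝⁿ} u_ε(x)² dx − ε^{(4−n)/2} · ∫_{ℝⁿ} (1 + |y|²)^{−(n−2)} dy | ≤ C. -/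
open MeasureTheory Real

set_option maxHeartbeats 1000000 in
theorem stmt13 (n : ℕ) (hn : 5 ≤ n) (r : ℝ) (hr : 0 < r)
    (φ : EuclideanSpace ℝ (Fin n) → ℝ)
    (hφ_smooth : ContDiff ℝ (⊤ : ℕ∞) φ)
    (hφ_radial : ∀ x y : EuclideanSpace ℝ (Fin n), ‖x‖ = ‖y‖ → φ x = φ y)
    (hφ_nonneg : ∀ x, 0 ≤ φ x) (hφ_le_one : ∀ x, φ x ≤ 1)
    (hφ_one : ∀ x ∈ Metric.closedBall (0 : EuclideanSpace ℝ (Fin n)) (r / 2), φ x = 1)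
    (hφ_supp : Function.support φ ⊆ Metric.ball (0 : EuclideanSpace ℝ (Fin n)) r)
    (u : ℝ → EuclideanSpace ℝ (Fin n) → ℝ)
    (hu : u = fun ε x => φ x * (ε + ‖x‖ ^ 2) ^ (-((n : ℝ) - 2) / 2)) :
    ∃ C > (0 : ℝ), ∀ ε ∈ Set.Ioc (0 : ℝ) 1,
      |(∫ x : EuclideanSpace ℝ (Fin n), u ε x ^ 2)
          - ε ^ ((4 - (n : ℝ)) / 2) *
            ∫ y : EuclideanSpace ℝ (Fin n), (1 + ‖y‖ ^ 2) ^ (-((n : ℝ) - 2))| ≤ C := by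
  subst hu
  obtain ⟨p, hp⟩ : ∃ p : ℝ, p = (n : ℝ) - 2 := ⟨_, rfl⟩
  rw [← hp]
  have hn5 : (5 : ℝ) ≤ (n : ℝ) := by exact_mod_cast hn
  have hp3 : (3 : ℝ) ≤ p := by rw [hp]; linarith
  have hnr : (Module.finrank ℝ (EuclideanSpace ℝ (Fin n)) : ℝ) < 2 * p := by
    rw [finrank_euclideanSpace]
    simp only [Fintype.card_fin]
    rw [hp]; linarith
  -- integrability of g
  have hg_int : Integrable (fun y : EuclideanSpace ℝ (Fin n) => (1 + ‖y‖ ^ 2) ^ (-p)) := by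
    have h := integrable_rpow_neg_one_add_norm_sq
      (μ := (volume : Measure (EuclideanSpace ℝ (Fin n)))) (r := 2 * p) hnr
    have he : -(2 * p) / 2 = -p := by ring
    simpa [he] using h
  obtain ⟨gI, hgI⟩ : ∃ gI : ℝ,
      gI = ∫ y : EuclideanSpace ℝ (Fin n), (1 + ‖y‖ ^ 2) ^ (-p) := ⟨_, rfl⟩
  rw [← hgI]
  have hgI_nonneg : 0 ≤ gI := hgI ▸ integral_nonneg fun y => by positivity
  obtain ⟨K, hK⟩ : ∃ K : ℝ, K = 4 / r ^ 2 + 1 := ⟨_, rfl⟩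
  have hKpos : 0 < K := by rw [hK]; positivity
  have hKp_nonneg : 0 ≤ K ^ p := rpow_nonneg hKpos.le p
  refine ⟨K ^ p * gI + 1, by nlinarith, ?_⟩
  rintro ε ⟨hε, hε1⟩
  have hcont : Continuous fun x : EuclideanSpace ℝ (Fin n) => (ε + ‖x‖ ^ 2) ^ (-p) :=
    (continuous_const.add ((continuous_norm).pow 2)).rpow_const
      fun x => Or.inl (by positivity : (0:ℝ) < ε + ‖x‖ ^ 2).ne'
  -- integrability of f_ε
  have hf_int : Integrable (fun x : EuclideanSpace ℝ (Fin n) => (ε + ‖x‖ ^ 2) ^ (-p)) := by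
    have hmpos : 0 < min ε 1 := lt_min hε one_pos
    refine (hg_int.const_mul (min ε 1 ^ (-p))).mono' hcont.aestronglyMeasurable
      (Filter.Eventually.of_forall fun x => ?_)
    have h1 : min ε 1 * (1 + ‖x‖ ^ 2) ≤ ε + ‖x‖ ^ 2 := by
      have h2 : min ε 1 ≤ ε := min_le_left _ _
      have h3 : min ε 1 ≤ 1 := min_le_right _ _
      nlinarith [sq_nonneg ‖x‖]
    have h4 : (ε + ‖x‖ ^ 2) ^ (-p) ≤ (min ε 1 * (1 + ‖x‖ ^ 2)) ^ (-p) :=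
      rpow_le_rpow_of_nonpos (by positivity) h1 (by linarith)
    have h5 : (min ε 1 * (1 + ‖x‖ ^ 2)) ^ (-p)
        = min ε 1 ^ (-p) * (1 + ‖x‖ ^ 2) ^ (-p) := mul_rpow hmpos.le (by positivity)
    rw [Real.norm_eq_abs, abs_of_nonneg (by positivity)]
    rw [h5] at h4; exact h4
  -- scaling identity
  have hscale : (∫ x : EuclideanSpace ℝ (Fin n), (ε + ‖x‖ ^ 2) ^ (-p))
      = ε ^ ((4 - (n : ℝ)) / 2) * gI := by
    have h := MeasureTheory.Measure.integral_comp_smul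
      (μ := (volume : Measure (EuclideanSpace ℝ (Fin n))))
      (f := fun x => (ε + ‖x‖ ^ 2) ^ (-p)) (Real.sqrt ε)
    have hlhs : (∫ x : EuclideanSpace ℝ (Fin n), (ε + ‖Real.sqrt ε • x‖ ^ 2) ^ (-p))
        = ε ^ (-p) * gI := by
      rw [hgI, ← integral_const_mul]
      congr 1; ext x
      rw [norm_smul, Real.norm_eq_abs, abs_of_nonneg (Real.sqrt_nonneg ε), mul_pow,
        Real.sq_sqrt hε.le, ← mul_rpow hε.le (by positivity)]
      ring_nf
    have hrhs : |((Real.sqrt ε ^ Module.finrank ℝ (EuclideanSpace ℝ (Fin n)))⁻¹)|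
        = ε ^ (-(n : ℝ) / 2) := by
      rw [finrank_euclideanSpace]
      simp only [Fintype.card_fin]
      rw [abs_inv, abs_of_nonneg (by positivity),
        Real.sqrt_eq_rpow, ← Real.rpow_natCast (ε ^ (1/2 : ℝ)) n, ← Real.rpow_mul hε.le,
        ← Real.rpow_neg hε.le]
      congr 1; ring
    rw [hlhs, hrhs, smul_eq_mul] at h
    have key : (∫ x : EuclideanSpace ℝ (Fin n), (ε + ‖x‖ ^ 2) ^ (-p))
        = ε ^ ((n : ℝ) / 2) * (ε ^ (-p) * gI) := by
      rw [h, ← mul_assoc, ← Real.rpow_add hε]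
      have e : (n : ℝ) / 2 + -(n : ℝ) / 2 = 0 := by ring
      rw [e, Real.rpow_zero, one_mul]
    rw [key, ← mul_assoc, ← Real.rpow_add hε]
    have e2 : (n : ℝ) / 2 + -p = (4 - (n : ℝ)) / 2 := by rw [hp]; ring
    rw [e2]
  -- rewrite u² as φ² * f
  have husq : ∀ x : EuclideanSpace ℝ (Fin n),
      (φ x * (ε + ‖x‖ ^ 2) ^ (-p / 2)) ^ 2 = φ x ^ 2 * (ε + ‖x‖ ^ 2) ^ (-p) := by
    intro x
    rw [mul_pow, ← Real.rpow_natCast ((ε + ‖x‖ ^ 2) ^ (-p / 2)) 2,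
      ← Real.rpow_mul (by positivity)]
    norm_num
  -- integrability of u²
  have hu_int : Integrable (fun x : EuclideanSpace ℝ (Fin n) =>
      (φ x * (ε + ‖x‖ ^ 2) ^ (-p / 2)) ^ 2) := by
    apply Continuous.integrable_of_hasCompactSupport
    · exact ((hφ_smooth.continuous.mul ((continuous_const.add
        ((continuous_norm).pow 2)).rpow_const fun x => Or.inl (by positivity : (0:ℝ) < ε + ‖x‖ ^ 2).ne')).pow 2)
    · apply HasCompactSupport.intro (isCompact_closedBall (0 : EuclideanSpace ℝ (Fin n)) r)
      intro x hx
      have hφ0 : φ x = 0 := by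
        by_contra h
        exact hx (Metric.ball_subset_closedBall (hφ_supp h))
      simp [hφ0]
  -- main computation
  have hdiff : (∫ x : EuclideanSpace ℝ (Fin n),
        (φ x * (ε + ‖x‖ ^ 2) ^ (-p / 2)) ^ 2)
      - ε ^ ((4 - (n : ℝ)) / 2) * gI
      = ∫ x : EuclideanSpace ℝ (Fin n), (φ x ^ 2 - 1) * (ε + ‖x‖ ^ 2) ^ (-p) := by
    rw [← hscale, ← integral_sub hu_int hf_int]
    congr 1; ext x
    rw [husq x]; ring
  rw [hdiff]
  -- pointwise bound
  have hbound : ∀ x : EuclideanSpace ℝ (Fin n),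
      |(φ x ^ 2 - 1) * (ε + ‖x‖ ^ 2) ^ (-p)| ≤ K ^ p * (1 + ‖x‖ ^ 2) ^ (-p) := by
    intro x
    by_cases hx : ‖x‖ ≤ r / 2
    · have h1 : φ x = 1 := hφ_one x (by simpa [Metric.mem_closedBall, dist_zero_right] using hx)
      rw [h1]
      norm_num
      exact mul_nonneg hKp_nonneg (rpow_nonneg (by positivity) _)
    · push_neg at hx
      have h1 : |φ x ^ 2 - 1| ≤ 1 := by
        rw [abs_le]
        constructor <;> nlinarith [hφ_nonneg x, hφ_le_one x]
      rw [abs_mul, abs_of_nonneg (a := (ε + ‖x‖ ^ 2) ^ (-p)) (rpow_nonneg (by positivity) _)]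
      have h2 : (ε + ‖x‖ ^ 2) ^ (-p) ≤ K ^ p * (1 + ‖x‖ ^ 2) ^ (-p) := by
        have hKinv : K⁻¹ * (1 + ‖x‖ ^ 2) ≤ ε + ‖x‖ ^ 2 := by
          rw [inv_mul_le_iff₀ hKpos, hK]
          have h3 : 1 ≤ 4 / r ^ 2 * ‖x‖ ^ 2 := by
            rw [div_mul_eq_mul_div, le_div_iff₀ (by positivity)]
            nlinarith
          nlinarith [sq_nonneg ‖x‖]
        calc (ε + ‖x‖ ^ 2) ^ (-p) ≤ (K⁻¹ * (1 + ‖x‖ ^ 2)) ^ (-p) :=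
              rpow_le_rpow_of_nonpos (mul_pos (inv_pos.mpr hKpos) (by positivity)) hKinv
                (by linarith)
          _ = K ^ p * (1 + ‖x‖ ^ 2) ^ (-p) := by
              rw [mul_rpow (inv_nonneg.mpr hKpos.le) (by positivity),
                Real.inv_rpow hKpos.le, Real.rpow_neg hKpos.le, inv_inv]
      calc |φ x ^ 2 - 1| * (ε + ‖x‖ ^ 2) ^ (-p) ≤ 1 * (ε + ‖x‖ ^ 2) ^ (-p) := by
            gcongr <;> positivity
        _ = (ε + ‖x‖ ^ 2) ^ (-p) := one_mul _
        _ ≤ K ^ p * (1 + ‖x‖ ^ 2) ^ (-p) := h2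
  have habs : |∫ x : EuclideanSpace ℝ (Fin n), (φ x ^ 2 - 1) * (ε + ‖x‖ ^ 2) ^ (-p)|
      ≤ ∫ x : EuclideanSpace ℝ (Fin n), |(φ x ^ 2 - 1) * (ε + ‖x‖ ^ 2) ^ (-p)| := by
    exact norm_integral_le_integral_norm (μ := volume)
      (fun x : EuclideanSpace ℝ (Fin n) => (φ x ^ 2 - 1) * (ε + ‖x‖ ^ 2) ^ (-p))
  calc |∫ x : EuclideanSpace ℝ (Fin n), (φ x ^ 2 - 1) * (ε + ‖x‖ ^ 2) ^ (-p)|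
      ≤ ∫ x : EuclideanSpace ℝ (Fin n), |(φ x ^ 2 - 1) * (ε + ‖x‖ ^ 2) ^ (-p)| := habs
    _ ≤ ∫ x : EuclideanSpace ℝ (Fin n), K ^ p * (1 + ‖x‖ ^ 2) ^ (-p) :=
        integral_mono_of_nonneg (Filter.Eventually.of_forall fun x => abs_nonneg _)
          (hg_int.const_mul _) (Filter.Eventually.of_forall hbound)
    _ = K ^ p * gI := by rw [integral_const_mul, hgI]
    _ ≤ K ^ p * gI + 1 := by linarith
end
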